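/- Suppose every sample from every distribution P in the W_∞-ball of radius ε around P_0 lies on the manifold, i.e., ℓ(θ,v) = ℓ(θ, g^{-1}(g(v))) almost surely. Then sup_{P : W_∞(P_0,P) ≤ ε} E_{x'∼P}[ℓ(θ, x')] ≤ E_{x∼P_0}[ sup_{‖δ_z‖_∞ ≤ ε_z} ℓ(θ, g^{-1}(g(x) + δ_z)) ], where ε_z = sup_{x, ‖δ_x‖_∞ ≤ ε} ‖g(x) - g(x+δ_x)‖_∞. -/

import Mathlib

/-!
Couple `P_0` with `P` by a coupling `π` that moves mass by less than `ε + η`; the slack `η > 0`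
is unavoidable because `W_∞` is an infimum that need not be attained. For `x` in the compact
support `K`, a displacement of norm `ε + η` moves `g x` by at most `ε_z + s`: shrink it to norm
`ε` and use uniform continuity of `g` near `K`. In the same way, a latent displacement of norm
`ε_z + s` raises `ℓ ∘ g⁻¹` by less than `c` above its supremum over the `ε_z`-ball. As
`ℓ = ℓ ∘ g⁻¹ ∘ g`, this gives `ℓ x' ≤ F x + c` for `π`-a.e. `(x, x')`, where `F` is the
integrand on the right, and integrating against `π` yields `E_P ℓ ≤ E_{P_0} F + c` for all `c > 0`.
-/

open MeasureTheory ENNReal NNReal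

/-- The ∞-Wasserstein distance: infimum over couplings of the essential
supremum of the (ℓ∞) distance. -/
noncomputable def Winf {E : Type*} [MeasurableSpace E] [NormedAddCommGroup E]
    (P Q : Measure E) : ℝ≥0∞ :=
  ⨅ (π : Measure (E × E)) (_ : π.map Prod.fst = P ∧ π.map Prod.snd = Q),
    essSup (fun p => (‖p.1 - p.2‖₊ : ℝ≥0∞)) π

open Metric Set Filter Pointwise

section RadiusSlack

variable {X E : Type*} [PseudoMetricSpace X] [NormedAddCommGroup E] [NormedSpace ℝ E]
  [ProperSpace E]

theorem IsCompact.exists_pos_forall_norm_le_add_exists_norm_le_lt_add {Φ : X → E → ℝ}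
    (hΦ : Continuous ↿Φ) {K : Set X} (hK : IsCompact K) {r c : ℝ} (hr : 0 ≤ r) (hc : 0 < c) :
    ∃ η > 0, ∀ x ∈ K, ∀ δ : E, ‖δ‖ ≤ r + η → ∃ δ' : E, ‖δ'‖ ≤ r ∧ Φ x δ < Φ x δ' + c := by
  obtain ⟨τ, hτ, hΦτ⟩ := Metric.uniformContinuousOn_iff.mp
    ((hK.prod (isCompact_closedBall (0 : E) (r + 1))).uniformContinuousOn_of_continuous
      hΦ.continuousOn) c hc
  set η := min (τ / 2) 1
  have hη : 0 < η := lt_min (half_pos hτ) one_pos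
  refine ⟨η, hη, fun x hx δ hδ => ?_⟩
  have hδ_mem : δ ∈ closedBall (0 : E) r + closedBall (0 : E) η := by
    rw [closedBall_add_closedBall hr hη.le, add_zero, mem_closedBall_zero_iff]
    exact hδ
  obtain ⟨δ', hδ', u, hu, rfl : δ' + u = δ⟩ := hδ_mem
  rw [mem_closedBall_zero_iff] at hδ' hu
  refine ⟨δ', hδ', ?_⟩
  have hη1 : η ≤ 1 := min_le_right _ _
  have hclose : dist ((x, δ' + u) : X × E) (x, δ') < τ := by
    rw [Prod.dist_eq, dist_self, dist_eq_norm, add_sub_cancel_left]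
    exact max_lt hτ (hu.trans_lt ((min_le_left _ _).trans_lt (half_lt_self hτ)))
  have hdiff : |Φ x (δ' + u) - Φ x δ'| < c := hΦτ (x, δ' + u) ⟨hx, ?_⟩ (x, δ') ⟨hx, ?_⟩ hclose
  · linarith [(abs_lt.mp hdiff).2]
  · rw [mem_closedBall_zero_iff]
    linarith [norm_add_le δ' u]
  · rw [mem_closedBall_zero_iff]
    linarith

theorem IsCompact.exists_pos_forall_norm_sub_le_add {F : Type*} [SeminormedAddCommGroup F]
    {g : E → F} (hg : Continuous g) {K : Set E} (hK : IsCompact K) {r ρ s : ℝ} (hr : 0 ≤ r)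
    (hgr : ∀ x ∈ K, ∀ δ : E, ‖δ‖ ≤ r → ‖g x - g (x + δ)‖ ≤ ρ) (hs : 0 < s) :
    ∃ η > 0, ∀ x ∈ K, ∀ δ : E, ‖δ‖ ≤ r + η → ‖g x - g (x + δ)‖ ≤ ρ + s := by
  have hΦ : Continuous ↿(fun x δ : E => ‖g x - g (x + δ)‖) := by fun_prop
  obtain ⟨η, hη, hslack⟩ := hK.exists_pos_forall_norm_le_add_exists_norm_le_lt_add hΦ hr hs
  refine ⟨η, hη, fun x hx δ hδ => ?_⟩
  obtain ⟨δ', hδ', hlt⟩ := hslack x hx δ hδ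
  linarith [hgr x hx δ' hδ']

end RadiusSlack

section BallSup

variable {E : Type*} [NormedAddCommGroup E]

noncomputable def ballSup (h : E → ℝ) (r : ℝ) (z : E) : ℝ :=
  sSup {t : ℝ | ∃ δ : E, ‖δ‖ ≤ r ∧ t = h (z + δ)}

theorem ballSup_eq_sSup_image (h : E → ℝ) (r : ℝ) (z : E) :
    ballSup h r z = sSup ((fun δ => h (z + δ)) '' closedBall 0 r) := by
  simp only [ballSup, image, mem_closedBall_zero_iff, eq_comm]

variable {h : E → ℝ} {r : ℝ}

theorem continuous_ballSup [ProperSpace E] (hh : Continuous h) : Continuous (ballSup h r) := by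
  rw [funext (ballSup_eq_sSup_image h r)]
  exact (isCompact_closedBall 0 r).continuous_sSup (by fun_prop)

theorem le_ballSup [ProperSpace E] (hh : Continuous h) (z : E) {δ : E} (hδ : ‖δ‖ ≤ r) :
    h (z + δ) ≤ ballSup h r z := by
  rw [ballSup_eq_sSup_image]
  exact le_csSup ((isCompact_closedBall 0 r).bddAbove_image (by fun_prop))
    ⟨δ, mem_closedBall_zero_iff.mpr hδ, rfl⟩

theorem ballSup_le (hr : 0 ≤ r) {M : ℝ} (hM : ∀ y, h y ≤ M) (z : E) : ballSup h r z ≤ M :=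
  csSup_le ⟨h (z + 0), 0, by simpa using hr, rfl⟩ (by rintro _ ⟨δ, -, rfl⟩; exact hM _)

theorem IsCompact.exists_pos_forall_lt_ballSup_add [NormedSpace ℝ E] [ProperSpace E]
    (hh : Continuous h) {C : Set E} (hC : IsCompact C) (hr : 0 ≤ r) {c : ℝ} (hc : 0 < c) :
    ∃ s > 0, ∀ z ∈ C, ∀ δ : E, ‖δ‖ ≤ r + s → h (z + δ) < ballSup h r z + c := by
  have hΦ : Continuous ↿(fun z δ : E => h (z + δ)) := by fun_prop
  obtain ⟨s, hs, hslack⟩ := hC.exists_pos_forall_norm_le_add_exists_norm_le_lt_add hΦ hr hc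
  refine ⟨s, hs, fun z hz δ hδ => ?_⟩
  obtain ⟨δ', hδ', hlt⟩ := hslack z hz δ hδ
  linarith [le_ballSup hh z hδ']

end BallSup

theorem exists_coupling_of_Winf_lt {E : Type*} [MeasurableSpace E] [NormedAddCommGroup E]
    {P Q : Measure E} {t : ℝ} (h : Winf P Q < ENNReal.ofReal t) :
    ∃ π : Measure (E × E), π.map Prod.fst = P ∧ π.map Prod.snd = Q ∧
      ∀ᵐ p ∂π, ‖p.1 - p.2‖ < t := by
  obtain ⟨π, hπ⟩ := iInf_lt_iff.mp h
  obtain ⟨⟨hπ1, hπ2⟩, hess⟩ := iInf_lt_iff.mp hπ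
  refine ⟨π, hπ1, hπ2, ?_⟩
  filter_upwards [ae_lt_of_essSup_lt hess] with p hp
  rw [← ENNReal.ofReal_coe_nnreal, coe_nnnorm] at hp
  exact (ENNReal.ofReal_lt_ofReal_iff_of_nonneg (norm_nonneg _)).mp hp

theorem integral_map_le_integral_map {Ω α β : Type*} [MeasurableSpace Ω] [MeasurableSpace α]
    [MeasurableSpace β] {π : Measure Ω} {u : Ω → α} {v : Ω → β} (hu : Measurable u)
    (hv : Measurable v) {f : α → ℝ} {g : β → ℝ} (hf : Integrable f (π.map u))
    (hg : Integrable g (π.map v)) (hfg : ∀ᵐ ω ∂π, f (u ω) ≤ g (v ω)) :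
    ∫ a, f a ∂(π.map u) ≤ ∫ b, g b ∂(π.map v) := by
  rw [integral_map hu.aemeasurable hf.aestronglyMeasurable,
    integral_map hv.aemeasurable hg.aestronglyMeasurable]
  exact integral_mono_ae (hf.comp_measurable hu) (hg.comp_measurable hv) hfg

theorem stmt3_general (d0 d : ℕ) (ε εz M : ℝ) (hε : 0 ≤ ε)
    (g : (Fin d0 → ℝ) → (Fin d → ℝ)) (hg : Continuous g)
    (ginv : (Fin d → ℝ) → (Fin d0 → ℝ)) (hginv : Continuous ginv)
    (ℓ : (Fin d0 → ℝ) → ℝ) (hℓc : Continuous ℓ)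
    (hℓ0 : ∀ x, 0 ≤ ℓ x) (hℓM : ∀ x, ℓ x ≤ M)
    (hrecon : ∀ x, ℓ (ginv (g x)) = ℓ x)
    (hbdd : BddAbove {r : ℝ | ∃ x δx : Fin d0 → ℝ, ‖δx‖ ≤ ε ∧ r = ‖g x - g (x + δx)‖})
    (hεz : εz = sSup {r : ℝ | ∃ x δx : Fin d0 → ℝ, ‖δx‖ ≤ ε ∧ r = ‖g x - g (x + δx)‖})
    (P0 : Measure (Fin d0 → ℝ)) [IsProbabilityMeasure P0]
    (K : Set (Fin d0 → ℝ)) (hK : IsCompact K) (hKsupp : P0 Kᶜ = 0) :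
    sSup {r : ℝ | ∃ P : Measure (Fin d0 → ℝ), IsProbabilityMeasure P ∧
        Winf P0 P ≤ ENNReal.ofReal ε ∧ r = ∫ x', ℓ x' ∂P}
      ≤ ∫ x, sSup {r : ℝ | ∃ δz : Fin d → ℝ, ‖δz‖ ≤ εz ∧
          r = ℓ (ginv (g x + δz))} ∂P0 := by
  have hgε : ∀ x δ, ‖δ‖ ≤ ε → ‖g x - g (x + δ)‖ ≤ εz :=
    fun x δ hδ => hεz ▸ le_csSup hbdd ⟨x, δ, hδ, rfl⟩
  have hεz0 : 0 ≤ εz := (norm_nonneg _).trans (hgε 0 0 (by simpa using hε))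
  set h : (Fin d → ℝ) → ℝ := fun y => ℓ (ginv y)
  have hh : Continuous h := hℓc.comp hginv
  set F : (Fin d0 → ℝ) → ℝ := fun x => ballSup h εz (g x)
  have hF0 : ∀ x, 0 ≤ F x := fun x => (hℓ0 _).trans (le_ballSup hh (g x) (δ := 0) (by simpa))
  have hFint : Integrable F P0 :=
    .of_bound ((continuous_ballSup hh).comp hg).aestronglyMeasurable M
      (.of_forall fun x => by
        rw [Real.norm_of_nonneg (hF0 x)]; exact ballSup_le hεz0 (fun _ => hℓM _) _)
  refine Real.sSup_le ?_ (integral_nonneg hF0)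
  rintro _ ⟨P, hP, hW, rfl⟩
  refine le_of_forall_pos_le_add fun c hc => ?_
  obtain ⟨s, hs, hslack_h⟩ := (hK.image hg).exists_pos_forall_lt_ballSup_add hh hεz0 hc
  obtain ⟨η, hη, hslack_g⟩ := hK.exists_pos_forall_norm_sub_le_add hg hε (fun x _ => hgε x) hs
  obtain ⟨π, rfl, rfl, hπ⟩ := exists_coupling_of_Winf_lt (t := ε + η) <| hW.trans_lt <| by
    rw [ENNReal.ofReal_lt_ofReal_iff (by linarith)]; linarith
  have hπK : ∀ᵐ p ∂π, p.1 ∈ K := ae_of_ae_map measurable_fst.aemeasurable (ae_iff.mpr hKsupp)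
  have hbound : ∀ᵐ p ∂π, ℓ p.2 ≤ F p.1 + c := by
    filter_upwards [hπK, hπ] with p hp1 hp12
    have hgp : ‖g p.2 - g p.1‖ ≤ εz + s := by
      simpa [norm_sub_rev] using hslack_g p.1 hp1 (p.2 - p.1) (by rw [norm_sub_rev]; exact hp12.le)
    simpa [h, hrecon] using (hslack_h (g p.1) ⟨p.1, hp1, rfl⟩ _ hgp).le
  calc ∫ x', ℓ x' ∂π.map Prod.snd
      ≤ ∫ x, (F x + c) ∂π.map Prod.fst :=
        integral_map_le_integral_map measurable_snd measurable_fst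
          (.of_bound hℓc.aestronglyMeasurable M (.of_forall fun x => by
            rw [Real.norm_of_nonneg (hℓ0 x)]; exact hℓM x))
          (hFint.add (integrable_const c)) hbound
    _ = ∫ x, F x ∂π.map Prod.fst + c := by
        rw [integral_add hFint (integrable_const c), integral_const, probReal_univ, one_smul]

/-- Lemma 1 of the paper: if every sample from every `P` in the `W_∞`-ball of radius `ε`
around `P_0` lies on the manifold (`ℓ(v) = ℓ(g⁻¹(g(v)))` a.s.), then
`sup_{P : W_∞(P_0,P) ≤ ε} E_{x'∼P}[ℓ(x')]
  ≤ E_{x∼P_0}[ sup_{‖δ_z‖_∞ ≤ ε_z} ℓ(g⁻¹(g(x) + δ_z)) ]`,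
where `ε_z = sup_{x, ‖δ_x‖_∞ ≤ ε} ‖g(x) - g(x + δ_x)‖_∞`. -/
theorem stmt3 (d0 d : ℕ) (ε εz M : ℝ) (hε : 0 ≤ ε)
    (g : (Fin d0 → ℝ) → (Fin d → ℝ)) (hg : Continuous g)
    (ginv : (Fin d → ℝ) → (Fin d0 → ℝ)) (hginv : Continuous ginv)
    (ℓ : (Fin d0 → ℝ) → ℝ) (hℓc : Continuous ℓ)
    (hℓ0 : ∀ x, 0 ≤ ℓ x) (hℓM : ∀ x, ℓ x ≤ M)
    (hrecon : ∀ x, ℓ (ginv (g x)) = ℓ x)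
    (hbdd : BddAbove {r : ℝ | ∃ x δx : Fin d0 → ℝ, ‖δx‖ ≤ ε ∧ r = ‖g x - g (x + δx)‖})
    (hεz : εz = sSup {r : ℝ | ∃ x δx : Fin d0 → ℝ, ‖δx‖ ≤ ε ∧ r = ‖g x - g (x + δx)‖})
    (P0 : Measure (Fin d0 → ℝ)) [IsProbabilityMeasure P0]
    (K : Set (Fin d0 → ℝ)) (hK : IsCompact K) (hKsupp : P0 Kᶜ = 0)
    (hmanifold : ∀ P : Measure (Fin d0 → ℝ), IsProbabilityMeasure P →
      Winf P0 P ≤ ENNReal.ofReal ε → ∀ᵐ v ∂P, ℓ v = ℓ (ginv (g v))) :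
    sSup {r : ℝ | ∃ P : Measure (Fin d0 → ℝ), IsProbabilityMeasure P ∧
        Winf P0 P ≤ ENNReal.ofReal ε ∧ r = ∫ x', ℓ x' ∂P}
      ≤ ∫ x, sSup {r : ℝ | ∃ δz : Fin d → ℝ, ‖δz‖ ≤ εz ∧
          r = ℓ (ginv (g x + δz))} ∂P0 :=
  stmt3_general d0 d ε εz M hε g hg ginv hginv ℓ hℓc hℓ0 hℓM hrecon hbdd hεz P0 K hK hKsupp
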